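/- arXiv:2212.10157 — 5 statements merged into one kernel-verified Lean document; each statement's English description precedes it below -/
import Mathlib

section
/- SL(2,ℤ) admits the presentation ⟨a, b | aba = bab, (ababab)^2 = 1⟩, via a ↦ [[1,-1],[0,1]] and b ↦ [[1,0],[1,1]]. -/
abbrev SL2Z := Matrix.SpecialLinearGroup (Fin 2) ℤ

def A : SL2Z := ⟨!![1, -1; 0, 1], by decide⟩
def B : SL2Z := ⟨!![1, 0; 1, 1], by decide⟩

/-- The relations `aba(bab)⁻¹` and `(ababab)²` in the free group on two generators. -/
def rels : Set (FreeGroup Bool) :=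
  letI a := FreeGroup.of true
  letI b := FreeGroup.of false
  {a * b * a * (b * a * b)⁻¹, (a * b * a * b * a * b) ^ 2}

/-!
Surjectivity holds because `S = ABA` and `T = A⁻¹` generate `SL(2,ℤ)`.

For injectivity, put `s = aba` and `u = ab` in `Γ = ⟨a, b | aba = bab, (ab)⁶ = 1⟩`. The braid
relation gives `s² = u³ =: ζ`, so `ζ` is central with `ζ² = 1`. Sending `a ↦ τ⁻¹σ`, `b ↦ σ⁻¹τ²`
defines `Γ → C₂ * C₃`, and `σ ↦ s`, `τ ↦ u` defines `C₂ * C₃ → Γ/⟨ζ⟩`; the composite is the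
projection, so the kernel of `Γ → C₂ * C₃` lies in `⟨ζ⟩ = {1, ζ}`. By ping-pong,
`C₂ * C₃` acts faithfully on the upper half-plane through `σ ↦ S`, `τ ↦ ST`: `S` maps `Re z < 0`
into `Re z > 0`, while `ST` and `(ST)² = T⁻¹S` map `Re z > 0` into `Re z < 0`. This action factors
`Γ → SL(2,ℤ) → Perm ℍ`, so the kernel of `Γ → SL(2,ℤ)` is inside `{1, ζ}`, and `ζ ↦ -1`.
-/

open Function Monoid ModularGroup UpperHalfPlane Subgroup

def zmodPowersHom {K : Type*} [Group K] (n : ℕ) (g : K) (h : g ^ n = 1) :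
    Multiplicative (ZMod n) →* K :=
  AddMonoidHom.toMultiplicativeLeft <| ZMod.lift n
    ⟨zmultiplesHom (Additive K) (.ofMul g), by simpa [← ofMul_pow] using congrArg Additive.ofMul h⟩

@[simp]
lemma zmodPowersHom_ofAdd_one {K : Type*} [Group K] (n : ℕ) (g : K) (h : g ^ n = 1) :
    zmodPowersHom n g h (.ofAdd 1) = g := by
  simp only [zmodPowersHom, AddMonoidHom.toMultiplicativeLeft_apply_apply, toAdd_ofAdd]
  rw [← Int.cast_one, ZMod.lift_coe]
  simp

abbrev CyclicFactor (i : Bool) : Type := Multiplicative (ZMod (cond i 2 3))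

abbrev C2C3 : Type := CoprodI CyclicFactor

namespace C2C3

def σ : C2C3 := CoprodI.of (i := true) (.ofAdd 1)

def τ : C2C3 := CoprodI.of (i := false) (.ofAdd 1)

lemma σ_sq : σ ^ 2 = 1 := by
  rw [σ, ← map_pow]
  exact (map_eq_one_iff _ (CoprodI.of_injective _)).mpr (by decide)

lemma τ_pow_three : τ ^ 3 = 1 := by
  rw [τ, ← map_pow]
  exact (map_eq_one_iff _ (CoprodI.of_injective _)).mpr (by decide)

variable {K : Type*} [Group K] {s u : K}

def lift (s u : K) (hs : s ^ 2 = 1) (hu : u ^ 3 = 1) : C2C3 →* K :=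
  CoprodI.lift fun
    | true => zmodPowersHom 2 s hs
    | false => zmodPowersHom 3 u hu

@[simp]
lemma lift_σ (hs : s ^ 2 = 1) (hu : u ^ 3 = 1) : lift s u hs hu σ = s := by
  simp [lift, σ]

@[simp]
lemma lift_τ (hs : s ^ 2 = 1) (hu : u ^ 3 = 1) : lift s u hs hu τ = u := by
  simp [lift, τ]

theorem lift_injective_of_ping_pong {α : Type*} [MulAction K α] (hs : s ^ 2 = 1)
    (hu : u ^ 3 = 1) {X Y : Set α} (hX : X.Nonempty) (hY : Y.Nonempty) (hXY : Disjoint X Y)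
    (hsY : Set.MapsTo (s • ·) Y X) (huX : Set.MapsTo (u • ·) X Y)
    (hu2X : Set.MapsTo (u ^ 2 • ·) X Y) : Injective (lift s u hs hu) := by
  refine CoprodI.lift_injective_of_ping_pong _ (Or.inr ⟨false, by simp⟩) (fun i => cond i X Y)
    (Bool.forall_bool.mpr ⟨hY, hX⟩) (pairwise_disjoint_on_bool.mpr hXY) ?_
  rintro (_ | _) (_ | _) hij h h1
  · exact absurd rfl hij
  · obtain rfl | rfl : h = .ofAdd 1 ∨ h = .ofAdd 1 ^ 2 := by
      revert h; show ∀ h : Multiplicative (ZMod 3), _; decide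
    · exact Set.smul_set_subset_iff.mpr fun x hx => by simpa [lift] using huX hx
    · exact Set.smul_set_subset_iff.mpr fun x hx => by simpa [lift] using hu2X hx
  · obtain rfl : h = .ofAdd 1 := by
      revert h; show ∀ h : Multiplicative (ZMod 2), _; decide
    exact Set.smul_set_subset_iff.mpr fun x hx => by simpa [lift] using hsY hx
  · exact absurd rfl hij

end C2C3

namespace ModularGroup

lemma re_S_smul (z : ℍ) : (S • z).re = -z.re / Complex.normSq z := by
  rw [modular_S_smul, re, coe_mk, Complex.inv_re, Complex.neg_re, Complex.normSq_neg, coe_re]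

lemma re_S_smul_neg_of_re_pos {z : ℍ} (hz : 0 < z.re) : (S • z).re < 0 := by
  rw [re_S_smul]
  exact div_neg_of_neg_of_pos (neg_neg_of_pos hz) (normSq_pos z)

lemma re_S_smul_pos_of_re_neg {z : ℍ} (hz : z.re < 0) : 0 < (S • z).re := by
  rw [re_S_smul]
  exact div_pos (neg_pos.mpr hz) (normSq_pos z)

end ModularGroup

noncomputable abbrev SL2Z.toPerm : SL2Z →* Equiv.Perm ℍ := MulAction.toPermHom SL2Z ℍ

@[simp]
lemma SL2Z.toPerm_smul (g : SL2Z) (z : ℍ) : SL2Z.toPerm g • z = g • z := rfl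

lemma SL2Z.toPerm_neg_one : SL2Z.toPerm (-1) = 1 :=
  Equiv.ext fun z => (SL_neg_smul 1 z).trans (one_smul _ z)

lemma SL2Z.toPerm_S_sq : SL2Z.toPerm S ^ 2 = 1 := by
  rw [← map_pow, show S ^ 2 = -1 by decide, SL2Z.toPerm_neg_one]

lemma SL2Z.toPerm_ST_pow_three : SL2Z.toPerm (S * T) ^ 3 = 1 := by
  rw [← map_pow, show (S * T) ^ 3 = -1 by decide, SL2Z.toPerm_neg_one]

noncomputable def C2C3.toPerm : C2C3 →* Equiv.Perm ℍ :=
  C2C3.lift (SL2Z.toPerm S) (SL2Z.toPerm (S * T)) SL2Z.toPerm_S_sq SL2Z.toPerm_ST_pow_three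

theorem C2C3.toPerm_injective : Injective C2C3.toPerm := by
  apply C2C3.lift_injective_of_ping_pong (X := {z : ℍ | 0 < z.re}) (Y := {z | z.re < 0})
  · exact ⟨(1 : ℝ) +ᵥ I, show 0 < 1 + I.re by simp⟩
  · exact ⟨(-1 : ℝ) +ᵥ I, show -1 + I.re < 0 by simp⟩
  · exact Set.disjoint_left.mpr fun z (h₁ : 0 < z.re) (h₂ : z.re < 0) => h₁.not_gt h₂
  · intro z hz
    simpa using re_S_smul_pos_of_re_neg hz
  · intro z (hz : 0 < z.re)
    have hTz : 0 < (T • z).re := by rw [re_T_smul]; linarith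
    simpa [mul_smul] using re_S_smul_neg_of_re_pos hTz
  · intro z (hz : 0 < z.re)
    have hSz := re_S_smul_neg_of_re_pos hz
    rw [← map_pow, show (S * T) ^ 2 = T⁻¹ * S by decide]
    show ((T⁻¹ * S) • z).re < 0
    rw [mul_smul, re_T_inv_smul]
    linarith

section Braid

variable {K : Type*} [Group K] {x y : K}

lemma mul_pow_three_of_braid (h : x * y * x = y * x * y) : (x * y) ^ 3 = (x * y * x) ^ 2 := by
  rw [pow_succ, pow_two, pow_two]
  calc x * y * (x * y) * (x * y) = x * y * x * (y * x * y) := by group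
    _ = _ := by rw [← h]

lemma commute_left_of_braid (h : x * y * x = y * x * y) : Commute ((x * y * x) ^ 2) x := by
  have hu : Commute ((x * y * x) ^ 2) (x * y) := by
    rw [← mul_pow_three_of_braid h]; exact Commute.pow_self _ _
  have := hu.inv_right.mul_right (Commute.pow_self (x * y * x) 2)
  rwa [show (x * y)⁻¹ * (x * y * x) = x by group] at this

lemma commute_right_of_braid (h : x * y * x = y * x * y) : Commute ((x * y * x) ^ 2) y := by
  have hu : Commute ((x * y * x) ^ 2) (x * y) := by
    rw [← mul_pow_three_of_braid h]; exact Commute.pow_self _ _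
  have := (Commute.pow_self (x * y * x) 2).inv_right.mul_right (hu.pow_right 2)
  rwa [show (x * y * x)⁻¹ * (x * y) ^ 2 = y by rw [pow_two]; group] at this

lemma braid_of_sq_eq_one_of_pow_three_eq_one {s u : K} (hs : s ^ 2 = 1) (hu : u ^ 3 = 1) :
    (u⁻¹ * s) * (s⁻¹ * u ^ 2) * (u⁻¹ * s) = (s⁻¹ * u ^ 2) * (u⁻¹ * s) * (s⁻¹ * u ^ 2) :=
  calc (u⁻¹ * s) * (s⁻¹ * u ^ 2) * (u⁻¹ * s) = s := by group
    _ = s⁻¹ * u ^ 3 := by rw [hu, mul_one, inv_eq_of_mul_eq_one_right ((pow_two s).symm.trans hs)]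
    _ = (s⁻¹ * u ^ 2) * (u⁻¹ * s) * (s⁻¹ * u ^ 2) := by group

lemma hexagon_of_pow_three_eq_one {s u : K} (hu : u ^ 3 = 1) :
    ((u⁻¹ * s) * (s⁻¹ * u ^ 2) * (u⁻¹ * s) * (s⁻¹ * u ^ 2) * (u⁻¹ * s) * (s⁻¹ * u ^ 2)) ^ 2
      = 1 := by
  rw [show (u⁻¹ * s) * (s⁻¹ * u ^ 2) * (u⁻¹ * s) * (s⁻¹ * u ^ 2) * (u⁻¹ * s) * (s⁻¹ * u ^ 2)
    = u ^ 3 by group, hu, one_pow]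

end Braid

lemma Subgroup.normal_of_le_center {G : Type*} [Group G] {H : Subgroup G} (h : H ≤ center G) :
    H.Normal :=
  ⟨fun n hn g => by rwa [mem_center_iff.mp (h hn) g, mul_inv_cancel_right]⟩

lemma PresentedGroup.mem_center_of_forall_commute {α : Type*} {R : Set (FreeGroup α)}
    {z : PresentedGroup R} (h : ∀ x, Commute z (.of x)) : z ∈ center (PresentedGroup R) := by
  rw [← centralizer_univ, ← coe_top, ← PresentedGroup.closure_range_of, centralizer_closure]
  rintro _ ⟨x, rfl⟩
  exact (h x).eq.symm

local notation "Γ" => PresentedGroup rels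

def toGroupOfBraid {K : Type*} [Group K] (x y : K) (h₁ : x * y * x = y * x * y)
    (h₂ : (x * y * x * y * x * y) ^ 2 = 1) : Γ →* K :=
  PresentedGroup.toGroup (f := fun i => cond i x y) <| by
    rintro r (rfl | rfl)
    · simpa only [map_mul, map_inv, FreeGroup.lift_apply_of, cond, mul_inv_eq_one] using h₁
    · simpa using h₂

section toGroupOfBraid

variable {K : Type*} [Group K] {x y : K} {h₁ : x * y * x = y * x * y}
  {h₂ : (x * y * x * y * x * y) ^ 2 = 1}

@[simp]
lemma toGroupOfBraid_of_true : toGroupOfBraid x y h₁ h₂ (.of true) = x :=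
  PresentedGroup.toGroup.of _

@[simp]
lemma toGroupOfBraid_of_false : toGroupOfBraid x y h₁ h₂ (.of false) = y :=
  PresentedGroup.toGroup.of _

end toGroupOfBraid

lemma braid_rel : (.of true * .of false * .of true : Γ) = .of false * .of true * .of false := by
  have := PresentedGroup.one_of_mem (rels := rels) (Set.mem_insert _ _)
  simp only [map_mul, map_inv] at this
  exact mul_inv_eq_one.mp this

lemma hexagon_rel :
    (.of true * .of false * .of true * .of false * .of true * .of false : Γ) ^ 2 = 1 := by
  have := PresentedGroup.one_of_mem (rels := rels) (Set.mem_insert_of_mem _ rfl)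
  simp only [map_mul, map_pow] at this
  exact this

def ζ : Γ := (.of true * .of false * .of true) ^ 2

lemma ζ_mem_center : ζ ∈ center Γ :=
  PresentedGroup.mem_center_of_forall_commute fun
    | true => commute_left_of_braid braid_rel
    | false => commute_right_of_braid braid_rel

lemma ζ_sq : ζ ^ 2 = 1 := by
  rw [ζ, ← mul_pow_three_of_braid braid_rel]
  simpa only [pow_three, mul_assoc] using hexagon_rel

instance : (zpowers ζ).Normal := normal_of_le_center (zpowers_le.mpr ζ_mem_center)

def toSL2Z : Γ →* SL2Z := toGroupOfBraid A B (by decide) (by decide)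

@[simp]
lemma toSL2Z_of_true : toSL2Z (.of true) = A := toGroupOfBraid_of_true

@[simp]
lemma toSL2Z_of_false : toSL2Z (.of false) = B := toGroupOfBraid_of_false

lemma toSL2Z_ζ : toSL2Z ζ = -1 := by
  simp only [ζ, map_pow, map_mul, toSL2Z_of_true, toSL2Z_of_false]
  decide

def toC2C3 : Γ →* C2C3 :=
  toGroupOfBraid (C2C3.τ⁻¹ * C2C3.σ) (C2C3.σ⁻¹ * C2C3.τ ^ 2)
    (braid_of_sq_eq_one_of_pow_three_eq_one C2C3.σ_sq C2C3.τ_pow_three)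
    (hexagon_of_pow_three_eq_one C2C3.τ_pow_three)

lemma mk_of_mul_of_mul_of_sq :
    (QuotientGroup.mk (.of true * .of false * .of true) : Γ ⧸ zpowers ζ) ^ 2 = 1 := by
  rw [← QuotientGroup.mk_pow, QuotientGroup.eq_one_iff]
  exact mem_zpowers ζ

lemma mk_of_mul_of_pow_three :
    (QuotientGroup.mk (.of true * .of false) : Γ ⧸ zpowers ζ) ^ 3 = 1 := by
  rw [← QuotientGroup.mk_pow, QuotientGroup.eq_one_iff, mul_pow_three_of_braid braid_rel]
  exact mem_zpowers ζ

def C2C3.toQuotient : C2C3 →* Γ ⧸ zpowers ζ :=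
  C2C3.lift (QuotientGroup.mk (.of true * .of false * .of true))
    (QuotientGroup.mk (.of true * .of false))
    mk_of_mul_of_mul_of_sq mk_of_mul_of_pow_three

lemma C2C3.toPerm_comp_toC2C3 : C2C3.toPerm.comp toC2C3 = SL2Z.toPerm.comp toSL2Z :=
  PresentedGroup.ext <| by
    rintro (_ | _) <;>
    · simp only [MonoidHom.comp_apply, toC2C3, toGroupOfBraid_of_true, toGroupOfBraid_of_false,
        toSL2Z_of_true, toSL2Z_of_false, map_mul, map_inv, map_pow, C2C3.toPerm, C2C3.lift_σ,
        C2C3.lift_τ]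
      simp only [← map_inv, ← map_pow, ← map_mul]
      congr 1
      decide

lemma C2C3.toQuotient_comp_toC2C3 :
    C2C3.toQuotient.comp toC2C3 = QuotientGroup.mk' (zpowers ζ) :=
  PresentedGroup.ext <| by
    rintro (_ | _) <;>
    · simp only [MonoidHom.comp_apply, toC2C3, toGroupOfBraid_of_true, toGroupOfBraid_of_false,
        pow_two, map_mul, map_inv, C2C3.toQuotient, C2C3.lift_σ, C2C3.lift_τ,
        QuotientGroup.mk'_apply]
      simp only [← QuotientGroup.mk_inv, ← QuotientGroup.mk_mul]
      congr 1
      group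

lemma ker_toSL2Z_le_ker_toC2C3 : toSL2Z.ker ≤ toC2C3.ker := fun g hg =>
  C2C3.toPerm_injective <| by
    rw [map_one, ← MonoidHom.comp_apply, C2C3.toPerm_comp_toC2C3, MonoidHom.comp_apply,
      hg, map_one]

lemma ker_toC2C3_le_zpowers_ζ : toC2C3.ker ≤ zpowers ζ := fun g hg => by
  rw [← QuotientGroup.eq_one_iff, ← QuotientGroup.mk'_apply, ← C2C3.toQuotient_comp_toC2C3,
    MonoidHom.comp_apply, hg, map_one]

theorem toSL2Z_injective : Injective toSL2Z := by
  rw [injective_iff_map_eq_one]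
  intro g hg
  obtain ⟨k, rfl⟩ := mem_zpowers_iff.mp <| ker_toC2C3_le_zpowers_ζ (ker_toSL2Z_le_ker_toC2C3 hg)
  rw [zpow_eq_zpow_emod' k ζ_sq, Nat.cast_ofNat] at hg ⊢
  rcases Int.emod_two_eq_zero_or_one k with hk | hk <;> rw [hk] at hg ⊢
  · exact zpow_zero ζ
  · rw [zpow_one, toSL2Z_ζ] at hg
    exact absurd hg (by decide)

theorem toSL2Z_surjective : Surjective toSL2Z := by
  rw [← MonoidHom.range_eq_top, eq_top_iff, ← SpecialLinearGroup.SL2Z_generators, closure_le]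
  rintro _ (rfl | rfl)
  · refine ⟨.of true * .of false * .of true, ?_⟩
    rw [map_mul, map_mul, toSL2Z_of_true, toSL2Z_of_false]
    decide
  · refine ⟨(.of true)⁻¹, ?_⟩
    rw [map_inv, toSL2Z_of_true]
    decide

theorem stmt3 :
    ∃ e : PresentedGroup rels ≃* SL2Z,
      e (PresentedGroup.of true) = A ∧ e (PresentedGroup.of false) = B :=
  ⟨.ofBijective toSL2Z ⟨toSL2Z_injective, toSL2Z_surjective⟩, toSL2Z_of_true, toSL2Z_of_false⟩
end

section
/- In SL(2,ℤ) with A = [[1,-1],[0,1]], B = [[1,0],[1,1]], X = [[0,-1],[1,0]], define f_n = A^{-(n+3)} X A^n for n ∈ ℤ. Then f_{n+1} f_{n-1} = f_n for all n ∈ ℤ. -/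
def X : SL2Z := ⟨!![0, -1; 1, 0], by decide⟩

def f (n : ℤ) : SL2Z := A ^ (-(n + 3)) * X * A ^ n

lemma key : X * A⁻¹ * X = A * X * A := by
  ext i j
  simp [A, X, Matrix.SpecialLinearGroup.SL2_inv_expl, Matrix.mul_apply, Fin.sum_univ_two]
  fin_cases i <;> fin_cases j <;> decide

theorem stmt9 (n : ℤ) : f (n + 1) * f (n - 1) = f n := by
  simp only [f]
  have h1 : A ^ (n + 1) * A ^ (-(n - 1 + 3)) = A⁻¹ := by
    rw [← zpow_add, ← zpow_neg_one]; ring_nf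
  have h2 : A ^ (-(n + 1 + 3)) = A ^ (-(n + 3)) * A⁻¹ := by
    rw [← zpow_neg_one, ← zpow_add]; ring_nf
  have h3 : A ^ n = A ^ (n - 1) * A ^ (1:ℤ) := by
    rw [← zpow_add]; ring_nf
  calc A ^ (-(n + 1 + 3)) * X * A ^ (n + 1) * (A ^ (-(n - 1 + 3)) * X * A ^ (n - 1))
      = A ^ (-(n + 1 + 3)) * (X * (A ^ (n + 1) * A ^ (-(n - 1 + 3))) * X) * A ^ (n - 1) := by
        group
    _ = A ^ (-(n + 3)) * A⁻¹ * (A * X * A) * A ^ (n - 1) := by rw [h1, key, h2]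
    _ = A ^ (-(n + 3)) * X * (A ^ (n - 1) * A) := by group
    _ = A ^ (-(n + 3)) * X * A ^ n := by rw [h3, zpow_one]
end

section
/- The matrix -I does not belong to the commutator subgroup of SL(2,ℤ). -/
set_option maxRecDepth 10000
set_option maxHeartbeats 1000000

def negI : SL2Z := ⟨!![-1, 0; 0, -1], by decide⟩

abbrev SL4 := Matrix.SpecialLinearGroup (Fin 2) (ZMod 4)

def F (a b c d : ZMod 4) : ZMod 4 :=
  2 + 2*b + c + 2*a^2 + 3*a*b + a*d + 2*b*d + c*d + 2*a^3 + 3*a^2*d + 2*a*b^2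
    + 2*a*b*d + 2*a*c^2 + a*c*d + 2*b^2*d + 2*c^2*d + 2*d^3

lemma Fmul : ∀ a b c d e f g h : ZMod 4, a*d - b*c = 1 → e*h - f*g = 1 →
    F (a*e+b*g) (a*f+b*h) (c*e+d*g) (c*f+d*h) = F a b c d + F e f g h := by decide

def fpoly (A : SL4) : ZMod 4 := F (A.1 0 0) (A.1 0 1) (A.1 1 0) (A.1 1 1)

lemma det_entries (A : SL4) : A.1 0 0 * A.1 1 1 - A.1 0 1 * A.1 1 0 = 1 := by
  have h := A.2
  rw [Matrix.det_fin_two] at h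
  exact h

def gHom : SL4 →* Multiplicative (ZMod 4) where
  toFun A := Multiplicative.ofAdd (fpoly A)
  map_one' := by decide
  map_mul' := by
    intro x y
    have hx := det_entries x
    have hy := det_entries y
    have hmul : ∀ i j, (x * y).1 i j = x.1 i 0 * y.1 0 j + x.1 i 1 * y.1 1 j := by
      intro i j
      show (x.1 * y.1) i j = _
      rw [Matrix.mul_apply, Fin.sum_univ_two]
    have : fpoly (x * y) = fpoly x + fpoly y := by
      unfold fpoly
      rw [hmul, hmul, hmul, hmul]
      exact Fmul _ _ _ _ _ _ _ _ hx hy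
    show Multiplicative.ofAdd (fpoly (x*y)) = Multiplicative.ofAdd (fpoly x) * Multiplicative.ofAdd (fpoly y)
    rw [← ofAdd_add, this]
  
def redHom : SL2Z →* SL4 := Matrix.SpecialLinearGroup.map (Int.castRingHom (ZMod 4))

theorem stmt12 : negI ∉ commutator SL2Z := by
  intro h
  have h2 : (gHom.comp redHom) negI = 1 :=
    Abelianization.commutator_subset_ker (gHom.comp redHom) h
  revert h2
  decide
end

section
/- In SL(2,ℤ), with A = [[1,-1],[0,1]] and B = [[1,0],[1,1]], the subgroup generated by the family {f_n = A^{-(n+3)}XA^n : n ∈ ℤ} (where X = ABA) equals the subgroup generated by the two elements f_{-2} and f_{-1}. -/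
theorem Subgroup.forall_mem_of_mul_inv_recursion {G : Type*} [Group G] {g : ℤ → G}
    (hg : ∀ n, g (n + 1) = g n * (g (n - 1))⁻¹) {H : Subgroup G} {m : ℤ}
    (hm : g m ∈ H) (hm' : g (m + 1) ∈ H) (n : ℤ) : g n ∈ H := by
  suffices h : ∀ n, g n ∈ H ∧ g (n + 1) ∈ H from (h n).1
  intro n
  induction n using Int.inductionOn' (b := m) with
  | zero => exact ⟨hm, hm'⟩
  | succ k _ ih =>
    refine ⟨ih.2, ?_⟩
    rw [add_assoc, one_add_one_eq_two, show k + 2 = k + 1 + 1 by ring, hg, add_sub_cancel_right]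
    exact H.mul_mem ih.2 (H.inv_mem ih.1)
  | pred k _ ih =>
    have hdown : g (k - 1) = (g (k + 1))⁻¹ * g k := by rw [hg]; group
    refine ⟨?_, by rw [sub_add_cancel]; exact ih.1⟩
    rw [hdown]
    exact H.mul_mem (H.inv_mem ih.2) ih.1

theorem X_mul_A_mul_X_inv : X * A * X⁻¹ = A⁻¹ * X * A⁻¹ := by
  ext i j
  simp only [Matrix.SpecialLinearGroup.coe_mul, Matrix.SpecialLinearGroup.coe_inv]
  fin_cases i <;> fin_cases j <;>
    simp [A, X, Matrix.adjugate_fin_two, Matrix.mul_apply, Fin.sum_univ_two]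

theorem f_add_one (n : ℤ) : f (n + 1) = f n * (f (n - 1))⁻¹ := by
  calc f (n + 1) = A ^ (-(n + 3)) * (A⁻¹ * X * A⁻¹) * A ^ (n + 2) := by simp only [f]; group
    _ = A ^ (-(n + 3)) * (X * A * X⁻¹) * A ^ (n + 2) := by rw [X_mul_A_mul_X_inv]
    _ = f n * (f (n - 1))⁻¹ := by simp only [f]; group

theorem stmt17 :
    Subgroup.closure (Set.range f) = Subgroup.closure ({f (-2), f (-1)} : Set SL2Z) := by
  refine le_antisymm ?_ (Subgroup.closure_mono (Set.pair_subset (Set.mem_range_self _)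
    (Set.mem_range_self _)))
  rw [Subgroup.closure_le]
  rintro _ ⟨n, rfl⟩
  refine Subgroup.forall_mem_of_mul_inv_recursion f_add_one (m := -2)
    (Subgroup.subset_closure (by simp)) (Subgroup.subset_closure ?_) n
  norm_num
end

section
/- The commutator subgroup of SL(2,ℤ) is a free group, freely generated by [[1,1],[1,2]] and [[2,1],[1,1]]. -/
def C : SL2Z := ⟨!![1, 1; 1, 2], by decide⟩
def D : SL2Z := ⟨!![2, 1; 1, 1], by decide⟩

open ModularGroup
open scoped commutatorElement Function

namespace Subgroup

variable {G : Type*} [Group G]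

theorem conj_mem_closure_of_forall_conj_mem {t : Set G} {g : G}
    (h : ∀ x ∈ t, g * x * g⁻¹ ∈ closure t) {y : G} (hy : y ∈ closure t) :
    g * y * g⁻¹ ∈ closure t := by
  have hmap : (closure t).map (MulAut.conj g).toMonoidHom ≤ closure t := by
    rw [MonoidHom.map_closure, closure_le]
    rintro _ ⟨x, hx, rfl⟩
    exact h x hx
  exact hmap ⟨y, hy, rfl⟩

theorem normal_closure_of_forall_conj_mem {s t : Set G} (hs : closure s = ⊤)
    (h : ∀ g ∈ s, ∀ x ∈ t, g * x * g⁻¹ ∈ closure t ∧ g⁻¹ * x * g ∈ closure t) :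
    (closure t).Normal := by
  rw [← normalizer_eq_top_iff, eq_top_iff, ← hs, closure_le]
  intro g hg y
  refine ⟨conj_mem_closure_of_forall_conj_mem fun x hx ↦ (h g hg x hx).1, fun hy ↦ ?_⟩
  have hinv := conj_mem_closure_of_forall_conj_mem (g := g⁻¹)
    (fun x hx ↦ by simpa using (h g hg x hx).2) hy
  simpa [mul_assoc] using hinv

theorem mul_comm_of_closure_eq_top {s : Set G} (hs : closure s = ⊤)
    (hcomm : ∀ x ∈ s, ∀ y ∈ s, x * y = y * x) (a b : G) : a * b = b * a := by
  have hcent : ∀ g : G, g ∈ s.centralizer.centralizer := fun g ↦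
    closure_le_centralizer_centralizer s (hs ▸ mem_top g)
  exact Set.centralizer_centralizer_comm_of_comm hcomm a (hcent a) b (hcent b)

theorem commutator_le_of_closure_eq_top {s : Set G} (hs : closure s = ⊤) {N : Subgroup G}
    [N.Normal] (h : ∀ x ∈ s, ∀ y ∈ s, ⁅x, y⁆ ∈ N) : _root_.commutator G ≤ N := by
  have hmk : closure (QuotientGroup.mk' N '' s) = ⊤ := by
    rw [← MonoidHom.map_closure, hs, map_top_of_surjective _ (QuotientGroup.mk'_surjective N)]
  have hcomm : ∀ a b : G ⧸ N, a * b = b * a := by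
    refine mul_comm_of_closure_eq_top hmk ?_
    rintro _ ⟨x, hx, rfl⟩ _ ⟨y, hy, rfl⟩
    rw [← commutatorElement_eq_one_iff_mul_comm, ← map_commutatorElement,
      QuotientGroup.mk'_apply, QuotientGroup.eq_one_iff]
    exact h x hx y hy
  rw [_root_.commutator_def, commutator_le]
  intro g _ g' _
  rw [← QuotientGroup.eq_one_iff, ← QuotientGroup.mk'_apply, map_commutatorElement,
    commutatorElement_eq_one_iff_mul_comm]
  exact hcomm _ _

end Subgroup

def nonzeroVectors (G M : Type*) [Group G] [AddMonoid M] [DistribMulAction G M] :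
    SubMulAction G M where
  carrier := {0}ᶜ
  smul_mem' g _ := (smul_ne_zero_iff_ne g).2

@[simp]
lemma mem_nonzeroVectors {G M : Type*} [Group G] [AddMonoid M] [DistribMulAction G M] {v : M} :
    v ∈ nonzeroVectors G M ↔ v ≠ 0 :=
  Iff.rfl

namespace SL2Z

open Matrix

lemma C_smul (v : Fin 2 → ℤ) : C • v = ![v 0 + v 1, v 0 + 2 * v 1] := by
  rw [Matrix.SpecialLinearGroup.smul_def]
  ext i; fin_cases i <;> simp [C, mulVec, dotProduct, Fin.sum_univ_two]

lemma D_smul (v : Fin 2 → ℤ) : D • v = ![2 * v 0 + v 1, v 0 + v 1] := by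
  rw [Matrix.SpecialLinearGroup.smul_def]
  ext i; fin_cases i <;> simp [D, mulVec, dotProduct, Fin.sum_univ_two]

lemma C_inv_smul (v : Fin 2 → ℤ) : C⁻¹ • v = ![2 * v 0 - v 1, v 1 - v 0] := by
  rw [inv_smul_eq_iff, C_smul]; ext i; fin_cases i <;> simp <;> ring

lemma D_inv_smul (v : Fin 2 → ℤ) : D⁻¹ • v = ![v 0 - v 1, 2 * v 1 - v 0] := by
  rw [inv_smul_eq_iff, D_smul]; ext i; fin_cases i <;> simp <;> ring

def gens : Bool → SL2Z := fun b ↦ bif b then C else D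

lemma range_gens : Set.range gens = {C, D} := by
  ext; simp [gens, or_comm]

/- Writing `v = (x, y)`, the axes and the diagonals `y = ±x` cut `ℤ² \ 0` into eight sectors;
each of the four cones below is a union of two opposite ones, and together they partition
`ℤ² \ 0`. -/
def attracting : Bool → Set (Fin 2 → ℤ)
  | true => {v | 0 < v 0 ∧ v 0 ≤ v 1 ∨ v 1 ≤ v 0 ∧ v 0 < 0}
  | false => {v | 0 ≤ v 1 ∧ v 1 < v 0 ∨ v 0 < v 1 ∧ v 1 ≤ 0}

def repelling : Bool → Set (Fin 2 → ℤ)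
  | true => {v | -v 0 ≤ v 1 ∧ v 1 < 0 ∨ 0 < v 1 ∧ v 1 ≤ -v 0}
  | false => {v | v 0 = 0 ∨ 0 < v 0 ∧ v 1 < -v 0 ∨ v 0 < 0 ∧ -v 0 < v 1}

lemma pairwise_disjoint_attracting : Pairwise (Disjoint on attracting) := by
  rintro (_ | _) (_ | _) hij <;> simp only [ne_eq, not_true_eq_false] at hij <;>
    simp only [Function.onFun, Set.disjoint_left, attracting, Set.mem_ofPred_eq] <;> omega

lemma pairwise_disjoint_repelling : Pairwise (Disjoint on repelling) := by
  rintro (_ | _) (_ | _) hij <;> simp only [ne_eq, not_true_eq_false] at hij <;>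
    simp only [Function.onFun, Set.disjoint_left, repelling, Set.mem_ofPred_eq] <;> omega

lemma disjoint_attracting_repelling (i j : Bool) : Disjoint (attracting i) (repelling j) := by
  cases i <;> cases j <;>
    simp only [Set.disjoint_left, attracting, repelling, Set.mem_ofPred_eq] <;> omega

lemma coords_ne_zero {v : Fin 2 → ℤ} (hv : v ≠ 0) : v 0 ≠ 0 ∨ v 1 ≠ 0 := by
  by_contra! h
  exact hv (funext (Fin.forall_fin_two.2 h))

lemma gens_smul_mem_attracting (b : Bool) {v : Fin 2 → ℤ} (hv : v ≠ 0)
    (h : v ∉ repelling b) : gens b • v ∈ attracting b := by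
  have := coords_ne_zero hv
  cases b <;> simp only [gens, cond_true, cond_false, C_smul, D_smul, attracting, repelling,
    Set.mem_ofPred_eq, cons_val_zero, cons_val_one] at h ⊢ <;> omega

lemma gens_inv_smul_mem_repelling (b : Bool) {v : Fin 2 → ℤ} (hv : v ≠ 0)
    (h : v ∉ attracting b) : (gens b)⁻¹ • v ∈ repelling b := by
  have := coords_ne_zero hv
  cases b <;> simp only [gens, cond_true, cond_false, C_inv_smul, D_inv_smul, attracting,
    repelling, Set.mem_ofPred_eq, cons_val_zero, cons_val_one] at h ⊢ <;> omega

theorem injective_lift_gens : Function.Injective (FreeGroup.lift gens) := by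
  refine FreeGroup.injective_lift_of_ping_pong (α := nonzeroVectors SL2Z (Fin 2 → ℤ)) gens
    (fun b ↦ Subtype.val ⁻¹' attracting b) (fun b ↦ Subtype.val ⁻¹' repelling b)
    ?_ (fun i j hij ↦ (pairwise_disjoint_attracting hij).preimage _)
    (fun i j hij ↦ (pairwise_disjoint_repelling hij).preimage _)
    (fun i j ↦ (disjoint_attracting_repelling i j).preimage _) ?_ ?_
  · rintro (_ | _)
    · exact ⟨⟨![1, 0], by simp⟩, by simp [attracting]⟩
    · exact ⟨⟨![1, 1], by simp⟩, by simp [attracting]⟩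
  · exact fun b ↦ Set.smul_set_subset_iff.2 fun v hv ↦ gens_smul_mem_attracting b v.2 hv
  · exact fun b ↦ Set.smul_set_subset_iff.2 fun v hv ↦ gens_inv_smul_mem_repelling b v.2 hv

lemma conj_mem_closure_C_D : ∀ g ∈ ({S, T} : Set SL2Z), ∀ x ∈ ({C, D} : Set SL2Z),
    g * x * g⁻¹ ∈ Subgroup.closure {C, D} ∧ g⁻¹ * x * g ∈ Subgroup.closure {C, D} := by
  have hC : C ∈ Subgroup.closure {C, D} := Subgroup.subset_closure (by simp)
  have hD : D ∈ Subgroup.closure {C, D} := Subgroup.subset_closure (by simp)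
  rintro g (rfl | rfl) x (rfl | rfl)
  · rw [show S * C * S⁻¹ = C⁻¹ from Subtype.ext (by decide),
      show S⁻¹ * C * S = C⁻¹ from Subtype.ext (by decide)]
    exact ⟨inv_mem hC, inv_mem hC⟩
  · rw [show S * D * S⁻¹ = D⁻¹ from Subtype.ext (by decide),
      show S⁻¹ * D * S = D⁻¹ from Subtype.ext (by decide)]
    exact ⟨inv_mem hD, inv_mem hD⟩
  · rw [show T * C * T⁻¹ = D from Subtype.ext (by decide),
      show T⁻¹ * C * T = D⁻¹ * C from Subtype.ext (by decide)]
    exact ⟨hD, mul_mem (inv_mem hD) hC⟩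
  · rw [show T * D * T⁻¹ = D * C⁻¹ from Subtype.ext (by decide),
      show T⁻¹ * D * T = C from Subtype.ext (by decide)]
    exact ⟨mul_mem hD (inv_mem hC), hC⟩

instance normal_closure_C_D : (Subgroup.closure {C, D}).Normal :=
  Subgroup.normal_closure_of_forall_conj_mem SpecialLinearGroup.SL2Z_generators
    conj_mem_closure_C_D

lemma closure_C_D_eq_commutator : Subgroup.closure {C, D} = commutator SL2Z := by
  have hD : ⁅T, S⁆ = D := Subtype.ext (by decide)
  refine le_antisymm ?_ ?_
  · rw [Subgroup.closure_le, commutator_def]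
    rintro _ (rfl | rfl)
    · rw [show C = ⁅S, T⁻¹⁆ from Subtype.ext (by decide)]
      exact Subgroup.commutator_mem_commutator (Subgroup.mem_top _) (Subgroup.mem_top _)
    · rw [← hD]
      exact Subgroup.commutator_mem_commutator (Subgroup.mem_top _) (Subgroup.mem_top _)
  · refine Subgroup.commutator_le_of_closure_eq_top SpecialLinearGroup.SL2Z_generators ?_
    have hD' : ⁅S, T⁆ = D⁻¹ := Subtype.ext (by decide)
    rintro _ (rfl | rfl) _ (rfl | rfl) <;>
      simp only [commutatorElement_self, one_mem, hD, hD', inv_mem_iff]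
    all_goals exact Subgroup.subset_closure (by simp)

end SL2Z

open SL2Z in
/-- The commutator subgroup of `SL(2,ℤ)` is free on `C` and `D`: there is an injective
homomorphism from the free group on two generators sending the generators to `C` and `D`,
whose range is exactly the commutator subgroup. -/
theorem stmt19 :
    ∃ φ : FreeGroup Bool →* SL2Z,
      Function.Injective φ ∧ φ (FreeGroup.of true) = C ∧ φ (FreeGroup.of false) = D ∧
        φ.range = commutator SL2Z := by
  refine ⟨FreeGroup.lift gens, injective_lift_gens, FreeGroup.lift_apply_of ..,
    FreeGroup.lift_apply_of .., ?_⟩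
  rw [FreeGroup.range_lift_eq_closure, range_gens, closure_C_D_eq_commutator]
end
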